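/- arXiv:math-ph/0304030 — 2 statements merged into one kernel-verified Lean document; each statement's English description precedes it below -/
import Mathlib

section
/- With f(λ) = ∫_{-1}^{1} e^{-iπ/4} √(x-λ) dx defined for Im λ < 0 with branch fixed by f(-i/√3) > 0, the function t ↦ f(-it) is strictly increasing on (0, ∞) and tends to +∞ as t → ∞. -/
open Complex

/-- `f(λ) = (2/3) e^{-iπ/4} ((1-λ)^{3/2} - (-1-λ)^{3/2})`, holomorphic on the lower
half-plane (principal branches), branch fixed by `f(-i/√3) > 0`. -/
noncomputable def couetteF (lam : ℂ) : ℂ :=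
  (2/3) * Complex.exp (-(Real.pi : ℂ) * Complex.I / 4) *
    ((1 - lam) ^ ((3:ℂ)/2) - (-1 - lam) ^ ((3:ℂ)/2))

lemma cpow_half_eq {z w : ℂ} (hz : 0 < z.im) (hw : w ^ 2 = z) (hre : 0 < w.re) :
    z ^ ((1:ℂ)/2) = w := by
  have hz0 : z ≠ 0 := by
    intro h; rw [h] at hz; simp at hz
  have hs : (z ^ ((1:ℂ)/2)) ^ 2 = z := by
    rw [sq, ← Complex.cpow_add _ _ hz0]
    norm_num
  have hres : 0 < (z ^ ((1:ℂ)/2)).re := by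
    rw [Complex.cpow_def_of_ne_zero hz0, Complex.exp_re]
    apply mul_pos (Real.exp_pos _)
    have him : (Complex.log z * ((1:ℂ)/2)).im = z.arg / 2 := by
      simp [Complex.mul_im, Complex.log_im]
      ring
    rw [him]
    apply Real.cos_pos_of_mem_Ioo
    constructor
    · have := Complex.neg_pi_lt_arg z
      have hpi := Real.pi_pos
      have h0 : 0 ≤ z.arg := Complex.arg_nonneg_iff.2 hz.le
      linarith
    · have : z.arg < Real.pi := Complex.arg_lt_pi_iff.2 (Or.inr (ne_of_gt hz))
      linarith
  have h2 : (z ^ ((1:ℂ)/2)) ^ 2 = w ^ 2 := by rw [hs, hw]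
  rcases sq_eq_sq_iff_eq_or_eq_neg.1 h2 with h | h
  · exact h
  · exfalso
    rw [h] at hres
    simp at hres
    linarith

lemma cpow_three_half {z : ℂ} (hz : z ≠ 0) : z ^ ((3:ℂ)/2) = z * z ^ ((1:ℂ)/2) := by
  have : ((3:ℂ)/2) = 1 + 1/2 := by norm_num
  rw [this, Complex.cpow_add _ _ hz, Complex.cpow_one]

noncomputable def pfn (t : ℝ) : ℝ := Real.sqrt (Real.sqrt (1 + t ^ 2) + t)

lemma sqrt_arg_nonneg (t : ℝ) : 0 ≤ Real.sqrt (1 + t ^ 2) + t := by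
  have h : |t| ≤ Real.sqrt (1 + t ^ 2) := by
    rw [← Real.sqrt_sq_eq_abs]
    apply Real.sqrt_le_sqrt; linarith
  have := neg_abs_le t
  linarith

lemma pfn_one_le {t : ℝ} (ht : 0 ≤ t) : 1 ≤ pfn t := by
  rw [pfn, Real.one_le_sqrt]
  have : (1:ℝ) ≤ Real.sqrt (1 + t ^ 2) := by
    rw [Real.one_le_sqrt]; nlinarith
  linarith

lemma pfn_sq (t : ℝ) : pfn t ^ 2 = Real.sqrt (1 + t ^ 2) + t :=
  Real.sq_sqrt (sqrt_arg_nonneg t)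

set_option maxHeartbeats 1000000 in
lemma key_identity {t : ℝ} (ht : 0 < t) :
    (couetteF (-Complex.I * t)).re = Real.sqrt 2 * (pfn t - 1 / (3 * pfn t ^ 3)) := by
  set r : ℝ := Real.sqrt (1 + t ^ 2) with hr
  clear_value r
  have hr2 : r ^ 2 = 1 + t ^ 2 := by rw [hr]; exact Real.sq_sqrt (by positivity)
  have hr1 : 1 < r := by nlinarith [Real.sqrt_nonneg (1 + t ^ 2)]
  set u : ℝ := Real.sqrt ((r + 1) / 2) with hu
  set v : ℝ := Real.sqrt ((r - 1) / 2) with hv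
  clear_value u v
  have hu2 : u ^ 2 = (r + 1) / 2 := by rw [hu]; exact Real.sq_sqrt (by linarith)
  have hv2 : v ^ 2 = (r - 1) / 2 := by rw [hv]; exact Real.sq_sqrt (by linarith)
  have hupos : 0 < u := by rw [hu]; exact Real.sqrt_pos.2 (by linarith)
  have hvpos : 0 < v := by rw [hv]; exact Real.sqrt_pos.2 (by linarith)
  have huv : u * v = t / 2 := by
    have h1 : (u * v - t / 2) * (u * v + t / 2) = 0 := by
      have : (u * v) ^ 2 = (t / 2) ^ 2 := by rw [mul_pow, hu2, hv2]; nlinarith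
      nlinarith [this]
    rcases mul_eq_zero.1 h1 with h | h
    · linarith
    · nlinarith
  -- square roots
  have hz1 : ((u : ℂ) + v * Complex.I) ^ 2 = 1 + t * Complex.I := by
    apply Complex.ext <;> simp [pow_two, Complex.mul_re, Complex.mul_im] <;> nlinarith
  have hz2 : ((v : ℂ) + u * Complex.I) ^ 2 = -1 + t * Complex.I := by
    apply Complex.ext <;> simp [pow_two, Complex.mul_re, Complex.mul_im] <;> nlinarith
  have him1 : (0:ℝ) < ((1:ℂ) + t * Complex.I).im := by simp [ht]
  have him2 : (0:ℝ) < ((-1:ℂ) + t * Complex.I).im := by simp [ht]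
  have hc1 : ((1:ℂ) + t * Complex.I) ^ ((1:ℂ)/2) = (u : ℂ) + v * Complex.I :=
    cpow_half_eq him1 hz1 (by simpa using hupos)
  have hc2 : ((-1:ℂ) + t * Complex.I) ^ ((1:ℂ)/2) = (v : ℂ) + u * Complex.I :=
    cpow_half_eq him2 hz2 (by simpa using hvpos)
  have hne1 : ((1:ℂ) + t * Complex.I) ≠ 0 := by
    intro h; have := congrArg Complex.im h; simp at this; linarith
  have hne2 : ((-1:ℂ) + t * Complex.I) ≠ 0 := by
    intro h; have := congrArg Complex.im h; simp at this; linarith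
  have he : Complex.exp (-(Real.pi : ℂ) * Complex.I / 4)
      = (Real.sqrt 2 / 2 : ℝ) - (Real.sqrt 2 / 2 : ℝ) * Complex.I := by
    have harg : -(Real.pi : ℂ) * Complex.I / 4 = ((-(Real.pi) / 4 : ℝ) : ℂ) * Complex.I := by
      push_cast; ring
    rw [harg, Complex.exp_mul_I, ← Complex.ofReal_cos, ← Complex.ofReal_sin]
    rw [show -Real.pi / 4 = -(Real.pi / 4) by ring, Real.cos_neg, Real.sin_neg, Real.cos_pi_div_four, Real.sin_pi_div_four]
    push_cast; ring
  have h1m : (1 : ℂ) - (-Complex.I * t) = 1 + t * Complex.I := by ring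
  have h2m : (-1 : ℂ) - (-Complex.I * t) = -1 + t * Complex.I := by ring
  have hmain : couetteF (-Complex.I * t)
      = (((2 * Real.sqrt 2 / 3) * ((1 + t) * u + (1 - t) * v) : ℝ) : ℂ) := by
    rw [couetteF, h1m, h2m, cpow_three_half hne1, cpow_three_half hne2, hc1, hc2, he]
    push_cast
    apply Complex.ext <;>
      simp [Complex.ext_iff, Complex.mul_re, Complex.mul_im, Complex.add_re, Complex.add_im,
        Complex.sub_re, Complex.sub_im] <;> ring
  rw [hmain, Complex.ofReal_re]
  -- now a real identity
  have hp2 : pfn t ^ 2 = r + t := by rw [pfn_sq t, hr]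
  set p : ℝ := pfn t with hp
  clear_value p
  have hp1 : 1 ≤ p := by rw [hp]; exact pfn_one_le ht.le
  have hpne : p ≠ 0 := by linarith
  have hq : (r - t) * p ^ 2 = 1 := by rw [hp2]; nlinarith
  have hpinv : p * (1 / p) = 1 := by field_simp
  have hinv : (1:ℝ) / p ^ 2 = r - t := by
    rw [eq_comm, eq_div_iff (by positivity)]; linarith [hq]
  have huval : u = (p + 1 / p) / 2 := by
    have hsq : ((p + 1 / p) / 2) ^ 2 = (r + 1) / 2 := by
      calc ((p + 1 / p) / 2) ^ 2 = (p ^ 2 + (1 / p) ^ 2 + 2 * (p * (1 / p))) / 4 := by ring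
        _ = (r + 1) / 2 := by rw [hpinv, show (1/p)^2 = 1/p^2 by ring, hinv, hp2]; ring
    have hpos : 0 ≤ (p + 1 / p) / 2 := by positivity
    rw [hu, ← hsq, Real.sqrt_sq hpos]
  have hvval : v = (p - 1 / p) / 2 := by
    have hsq : ((p - 1 / p) / 2) ^ 2 = (r - 1) / 2 := by
      calc ((p - 1 / p) / 2) ^ 2 = (p ^ 2 + (1 / p) ^ 2 - 2 * (p * (1 / p))) / 4 := by ring
        _ = (r - 1) / 2 := by rw [hpinv, show (1/p)^2 = 1/p^2 by ring, hinv, hp2]; ring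
    have hpos : 0 ≤ (p - 1 / p) / 2 := by
      have : 1 / p ≤ 1 := by rw [div_le_one (by linarith)]; linarith
      linarith
    rw [hv, ← hsq, Real.sqrt_sq hpos]
  rw [huval, hvval]
  have htp : t = (p ^ 4 - 1) / (2 * p ^ 2) := by
    rw [eq_div_iff (by positivity)]
    linear_combination (-(p^2)) * hp2 - hq
  rw [htp]
  field_simp
  ring

lemma pfn_strictMono : StrictMonoOn pfn (Set.Ioi 0) := by
  intro a ha b hb hab
  simp only [Set.mem_Ioi] at ha hb
  apply Real.sqrt_lt_sqrt (sqrt_arg_nonneg a)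
  have : Real.sqrt (1 + a ^ 2) ≤ Real.sqrt (1 + b ^ 2) := by
    apply Real.sqrt_le_sqrt; nlinarith
  linarith


/-- `t ↦ f(-it)` is strictly increasing on `(0, ∞)` and tends to `+∞` as `t → ∞`. -/
theorem stmt_4 :
    StrictMonoOn (fun t : ℝ => (couetteF (-Complex.I * t)).re) (Set.Ioi 0) ∧
      Filter.Tendsto (fun t : ℝ => (couetteF (-Complex.I * t)).re)
        Filter.atTop Filter.atTop := by
  have hsq2 : 0 < Real.sqrt 2 := by positivity
  constructor
  · intro a ha b hb hab
    simp only [Set.mem_Ioi] at ha hb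
    simp only
    rw [key_identity ha, key_identity hb]
    have hpa := pfn_one_le ha.le
    have hpb := pfn_one_le hb.le
    have hpp : pfn a < pfn b := pfn_strictMono ha hb hab
    have h3 : 1 / (3 * pfn b ^ 3) < 1 / (3 * pfn a ^ 3) := by
      apply one_div_lt_one_div_of_lt (by positivity)
      have := pow_lt_pow_left₀ hpp (by linarith : (0:ℝ) ≤ pfn a) (by norm_num : 3 ≠ 0)
      linarith
    have : pfn a - 1 / (3 * pfn a ^ 3) < pfn b - 1 / (3 * pfn b ^ 3) := by linarith
    exact mul_lt_mul_of_pos_left this hsq2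
  · have hbound : ∀ᶠ t in Filter.atTop,
        Real.sqrt 2 * (Real.sqrt t - 1/3) ≤ (couetteF (-Complex.I * t)).re := by
      filter_upwards [Filter.eventually_gt_atTop 0] with t ht
      rw [key_identity ht]
      have hp1 := pfn_one_le ht.le
      have hle : Real.sqrt t ≤ pfn t := by
        apply Real.sqrt_le_sqrt
        have := Real.sqrt_nonneg (1 + t ^ 2)
        linarith
      have h3 : 1 / (3 * pfn t ^ 3) ≤ 1/3 := by
        rw [div_le_div_iff₀ (by positivity) (by norm_num)]
        nlinarith [pow_le_pow_left₀ zero_le_one hp1 3]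
      have : Real.sqrt t - 1/3 ≤ pfn t - 1 / (3 * pfn t ^ 3) := by linarith
      exact mul_le_mul_of_nonneg_left this hsq2.le
    apply Filter.tendsto_atTop_mono' _ hbound
    have hsqrt : Filter.Tendsto Real.sqrt Filter.atTop Filter.atTop := by
      apply Filter.tendsto_atTop_atTop.2
      intro b
      refine ⟨(max b 0) ^ 2, fun a ha => ?_⟩
      calc b ≤ max b 0 := le_max_left _ _
        _ = Real.sqrt ((max b 0) ^ 2) := (Real.sqrt_sq (le_max_right _ _)).symm
        _ ≤ Real.sqrt a := Real.sqrt_le_sqrt ha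
    exact (hsqrt.atTop_add tendsto_const_nhds).const_mul_atTop hsq2
end

section
/- With f as above, f(λ) = 2√(iλ) + O(|λ|^{-3/2}) as λ → ∞ in the semi-strip {Im λ < 0, -1 < Re λ < 1}, where √(iλ) denotes the branch positive on the negative imaginary axis. -/
open Complex

private lemma cpow_half_sq' (z : ℂ) (hz : z ≠ 0) : (z ^ ((1:ℂ)/2)) ^ 2 = z := by
  rw [sq, ← Complex.cpow_add _ _ hz]; norm_num

private lemma cpow_half_re_pos' (z : ℂ) (hz : z ≠ 0) (h : arg z ≠ Real.pi) :
    0 < (z ^ ((1:ℂ)/2)).re := by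
  rw [Complex.cpow_def_of_ne_zero hz, Complex.exp_re]
  have h1 : (Complex.log z * (1/2)).im = arg z / 2 := by
    simp [Complex.mul_im, Complex.log_im]; ring
  have h2 : -Real.pi < arg z := Complex.neg_pi_lt_arg z
  have h3 : arg z < Real.pi := lt_of_le_of_ne (Complex.arg_le_pi z) h
  rw [h1]
  have : 0 < Real.cos (arg z / 2) := by
    apply Real.cos_pos_of_mem_Ioo; constructor <;> [linarith; linarith]
  positivity

private lemma cpow_half_im_nonneg' (z : ℂ) (hz : z ≠ 0) (h : 0 ≤ arg z) :
    0 ≤ (z ^ ((1:ℂ)/2)).im := by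
  rw [Complex.cpow_def_of_ne_zero hz, Complex.exp_im]
  have h1 : (Complex.log z * (1/2)).im = arg z / 2 := by
    simp [Complex.mul_im, Complex.log_im]; ring
  have h3 : arg z ≤ Real.pi := Complex.arg_le_pi z
  rw [h1]
  have : 0 ≤ Real.sin (arg z / 2) := by
    apply Real.sin_nonneg_of_nonneg_of_le_pi <;> linarith [Real.pi_pos]
  positivity

private lemma abs_le_abs_add' (x y : ℂ) (hx : 0 ≤ x.re) (hx' : 0 ≤ x.im) (hy : 0 ≤ y.re)
    (hy' : 0 ≤ y.im) : ‖x‖ ≤ ‖x + y‖ := by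
  have h : Complex.normSq x ≤ Complex.normSq (x + y) := by
    simp only [Complex.normSq_apply, Complex.add_re, Complex.add_im]
    nlinarith [Complex.normSq_nonneg y]
  rw [Complex.norm_def, Complex.norm_def]
  exact Real.sqrt_le_sqrt h

private lemma Esq' : Complex.exp (-(Real.pi:ℂ) * I / 4) * Complex.exp (-(Real.pi:ℂ) * I / 4) = -I := by
  rw [← Complex.exp_add]
  have : -(Real.pi:ℂ) * I / 4 + -(Real.pi:ℂ) * I / 4 = (-((Real.pi:ℂ)/2)) * I := by ring
  rw [this, Complex.exp_mul_I, Complex.cos_neg, Complex.sin_neg,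
    Complex.cos_pi_div_two, Complex.sin_pi_div_two]
  ring

private lemma Ere' : (Complex.exp (-(Real.pi:ℂ) * I / 4)).re = Real.cos (Real.pi/4) := by
  rw [Complex.exp_re]
  have h1 : (-(Real.pi:ℂ) * I / 4).re = 0 := by simp
  have h2 : (-(Real.pi:ℂ) * I / 4).im = -(Real.pi/4) := by simp; ring
  rw [h1, h2, Real.exp_zero, Real.cos_neg, one_mul]

private lemma Eim' : (Complex.exp (-(Real.pi:ℂ) * I / 4)).im = -Real.sin (Real.pi/4) := by
  rw [Complex.exp_im]
  have h1 : (-(Real.pi:ℂ) * I / 4).re = 0 := by simp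
  have h2 : (-(Real.pi:ℂ) * I / 4).im = -(Real.pi/4) := by simp; ring
  rw [h1, h2, Real.exp_zero, Real.sin_neg, one_mul]

private lemma Eabs' : ‖(Complex.exp (-(Real.pi:ℂ) * I / 4))‖ = 1 := by
  rw [Complex.norm_exp]
  have h1 : (-(Real.pi:ℂ) * I / 4).re = 0 := by simp
  rw [h1, Real.exp_zero]

private lemma branch' (lam : ℂ) (h : lam.im < 0) :
    (I * lam) ^ ((1:ℂ)/2) =
      Complex.exp (-(Real.pi:ℂ) * I / 4) * (-lam) ^ ((1:ℂ)/2) := by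
  have hlam : lam ≠ 0 := by
    intro h0; rw [h0] at h; simp at h
  have hIl : I * lam ≠ 0 := mul_ne_zero I_ne_zero hlam
  have hnl : -lam ≠ 0 := neg_ne_zero.mpr hlam
  have hnlim : 0 < (-lam).im := by simp only [Complex.neg_im]; linarith
  set t := (I * lam) ^ ((1:ℂ)/2) with ht
  set s := (-lam) ^ ((1:ℂ)/2) with hs
  set E := Complex.exp (-(Real.pi:ℂ) * I / 4) with hE
  have hsq : t ^ 2 = (E * s) ^ 2 := by
    rw [cpow_half_sq' _ hIl]
    have : (E * s) ^ 2 = (E * E) * s ^ 2 := by ring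
    rw [this, Esq', cpow_half_sq' _ hnl]; ring
  have htre : 0 < t.re := by
    apply cpow_half_re_pos' _ hIl
    intro habs
    have h2 : (I * lam).re = -lam.im := by simp
    have := (Complex.arg_eq_pi_iff.mp habs).1
    rw [h2] at this
    linarith
  have hsre : 0 < s.re := by
    apply cpow_half_re_pos' _ hnl
    intro habs
    have := (Complex.arg_eq_pi_iff.mp habs).2
    linarith
  have hsim : 0 ≤ s.im := cpow_half_im_nonneg' _ hnl (Complex.arg_nonneg_iff.mpr hnlim.le)
  have hure : 0 < (E * s).re := by
    rw [Complex.mul_re, Ere', Eim']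
    have hc : 0 < Real.cos (Real.pi/4) := by
      apply Real.cos_pos_of_mem_Ioo
      constructor <;> nlinarith [Real.pi_pos]
    have hsin : 0 < Real.sin (Real.pi/4) := by
      apply Real.sin_pos_of_pos_of_lt_pi <;> nlinarith [Real.pi_pos]
    nlinarith
  have hfac : (t - E * s) * (t + E * s) = 0 := by
    have : t ^ 2 - (E * s) ^ 2 = 0 := by rw [hsq]; ring
    linear_combination this
  rcases mul_eq_zero.mp hfac with h1 | h1
  · exact sub_eq_zero.mp h1
  · exfalso
    have h2 : (t + E * s).re = 0 := by rw [h1]; simp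
    rw [Complex.add_re] at h2
    linarith

private lemma key_identity' (a b s lam : ℂ) (ha2 : a^2 = 1 - lam) (hb2 : b^2 = -1 - lam)
    (hs2 : s^2 = -lam) :
    (a^3 - b^3 - 3*s) * ((a+b)^2*(a+s)*(b+s)) = 2*(s - a - b) := by
  have haS : a^2 = s^2 + 1 := by rw [ha2, hs2]; ring
  have hbS : b^2 = s^2 - 1 := by rw [hb2, hs2]; ring
  linear_combination ((1)*s + (-1)*s*s*s + (1)*s*s*s*s*s + (1)*b + (-5)*b*s*s + (3)*b*s*s*s*s + (-3)*b*b*s + (3)*b*b*s*s*s + (1)*b*b*b + (-3)*b*b*b*b*s + (-2)*b*b*b*b*b + (-2)*a*s*s + (1)*a*s*s*s*s + (3)*a*b*s*s*s + (2)*a*b*b + (3)*a*b*b*s*s + (-1)*a*b*b*b*b + (1)*a*a*s + (1)*a*a*s*s*s + (1)*a*a*b + (3)*a*a*b*s*s + (3)*a*a*b*b*s + (1)*a*a*b*b*b + (1)*a*a*a*s*s + (3)*a*a*a*b*s + (2)*a*a*a*b*b + (1)*a*a*a*a*s + (1)*a*a*a*a*b) * haS + ((-1)*s + (-1)*s*s*s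 + (-1)*s*s*s*s*s + (3)*b + (-1)*b*s*s + (-3)*b*s*s*s*s + (-2)*b*b*s + (-4)*b*b*s*s*s + (-2)*b*b*b + (-3)*b*b*b*s*s + (-1)*b*b*b*b*s + (2)*a + (0)*a*s*s + (-1)*a*s*s*s*s + (-3)*a*b*s*s*s + (-4)*a*b*b*s*s + (-3)*a*b*b*b*s + (-1)*a*b*b*b*b) * hbS

private lemma final_arith' (u X AB AS BS Aa Ba Num : ℝ)
    (hu2le : 2 ≤ u) (hX0 : 0 ≤ X) (hAa0 : 0 ≤ Aa) (hBa0 : 0 ≤ Ba)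
    (hAB0 : 0 ≤ AB) (hAS0 : 0 ≤ AS) (hBS0 : 0 ≤ BS)
    (hAalow : u^2 - 1 ≤ Aa^2) (hAaup : Aa^2 ≤ 1 + u^2) (hBaup : Ba^2 ≤ 1 + u^2)
    (hL1 : u ≤ AS) (hL2 : u ≤ BS) (hL3 : Aa ≤ AB)
    (hNum : Num ≤ u + Aa + Ba) (hNum0 : 0 ≤ Num)
    (hXP : X * (AB^2 * AS * BS) = 2 * Num) :
    2/3 * X ≤ 16 / u^3 := by
  have hu0 : (0:ℝ) ≤ u := by linarith
  have hAau : Aa ≤ 5/4 * u := by nlinarith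
  have hBau : Ba ≤ 5/4 * u := by nlinarith
  have e1 : 3/4 * u^2 ≤ AB^2 := by nlinarith
  have e2 : u^2 ≤ AS * BS := by nlinarith
  have e3 : (3/4 * u^2) * u^2 ≤ AB^2 * (AS * BS) :=
    mul_le_mul e1 e2 (by positivity) (by positivity)
  have hkey : X * (3/4 * u^2 * u^2) ≤ 2 * Num := by
    calc X * (3/4 * u^2 * u^2) = X * ((3/4 * u^2) * u^2) := by ring
      _ ≤ X * (AB^2 * (AS * BS)) := mul_le_mul_of_nonneg_left e3 hX0
      _ = X * (AB^2 * AS * BS) := by ring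
      _ = 2 * Num := hXP
  have h7 : 2 * Num ≤ 7 * u := by nlinarith
  have hXu3 : X * u^3 ≤ 28/3 := by nlinarith
  rw [le_div_iff₀ (by positivity)]
  nlinarith

set_option maxHeartbeats 2000000 in
/-- `f(λ) = 2√(iλ) + O(|λ|^{-3/2})` as `λ → ∞` in the semi-strip
`{Im λ < 0, -1 < Re λ < 1}`, where `√(iλ)` is the branch positive on the negative
imaginary axis (the principal branch). -/
theorem stmt_5 :
    ∃ C R : ℝ, 0 < C ∧ 0 < R ∧ ∀ lam : ℂ, lam.im < 0 → -1 < lam.re → lam.re < 1 →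
      R ≤ ‖lam‖ →
      ‖couetteF lam - 2 * (Complex.I * lam) ^ ((1:ℂ)/2)‖ ≤
        C * (‖lam‖) ^ (-(3:ℝ)/2) := by
  refine ⟨16, 4, by norm_num, by norm_num, ?_⟩
  intro lam him hre1 hre2 hR
  -- basic nonvanishing
  have hlam : lam ≠ 0 := by intro h0; rw [h0] at him; simp at him
  have h1im : 0 < (1 - lam).im := by simp only [Complex.sub_im, Complex.one_im]; linarith
  have h2im : 0 < (-1 - lam).im := by
    simp only [Complex.sub_im, Complex.neg_im, Complex.one_im]; simp; linarith
  have h3im : 0 < (-lam).im := by simp only [Complex.neg_im]; linarith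
  have h1ne : (1 : ℂ) - lam ≠ 0 := by
    intro h0; rw [Complex.ext_iff] at h0; simp only [Complex.sub_im, Complex.one_im] at h0
    have := h0.2; simp at this; linarith
  have h2ne : (-1 : ℂ) - lam ≠ 0 := by
    intro h0; rw [Complex.ext_iff] at h0
    simp only [Complex.sub_im, Complex.neg_im, Complex.one_im] at h0
    have := h0.2; simp at this; linarith
  have h3ne : -lam ≠ 0 := neg_ne_zero.mpr hlam
  set a := (1 - lam) ^ ((1:ℂ)/2) with ha
  set b := (-1 - lam) ^ ((1:ℂ)/2) with hb
  set s := (-lam) ^ ((1:ℂ)/2) with hsdef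
  set E := Complex.exp (-(Real.pi:ℂ) * I / 4) with hE
  have ha2 : a ^ 2 = 1 - lam := cpow_half_sq' _ h1ne
  have hb2 : b ^ 2 = -1 - lam := cpow_half_sq' _ h2ne
  have hs2 : s ^ 2 = -lam := cpow_half_sq' _ h3ne
  -- re/im positivity
  have argne : ∀ z : ℂ, 0 < z.im → arg z ≠ Real.pi := by
    intro z hz habs
    have := (Complex.arg_eq_pi_iff.mp habs).2; linarith
  have hare : 0 < a.re := cpow_half_re_pos' _ h1ne (argne _ h1im)
  have hbre : 0 < b.re := cpow_half_re_pos' _ h2ne (argne _ h2im)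
  have hsre : 0 < s.re := cpow_half_re_pos' _ h3ne (argne _ h3im)
  have haim : 0 ≤ a.im := cpow_half_im_nonneg' _ h1ne (Complex.arg_nonneg_iff.mpr h1im.le)
  have hbim : 0 ≤ b.im := cpow_half_im_nonneg' _ h2ne (Complex.arg_nonneg_iff.mpr h2im.le)
  have hsim : 0 ≤ s.im := cpow_half_im_nonneg' _ h3ne (Complex.arg_nonneg_iff.mpr h3im.le)
  -- structural equality
  have h32a : (1 - lam) ^ ((3:ℂ)/2) = a ^ 3 := by
    have h1 : ((3:ℂ)/2) = 1 + 1/2 := by norm_num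
    rw [h1, Complex.cpow_add _ _ h1ne, Complex.cpow_one, ← ha, ← ha2]; ring
  have h32b : (-1 - lam) ^ ((3:ℂ)/2) = b ^ 3 := by
    have h1 : ((3:ℂ)/2) = 1 + 1/2 := by norm_num
    rw [h1, Complex.cpow_add _ _ h2ne, Complex.cpow_one, ← hb, ← hb2]; ring
  have hmain : couetteF lam - 2 * (I * lam) ^ ((1:ℂ)/2)
      = 2/3 * E * (a ^ 3 - b ^ 3 - 3 * s) := by
    rw [couetteF, h32a, h32b, branch' lam him, ← hE, ← hsdef]; ring
  -- abs computation
  rw [hmain]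
  have habsE : ‖E‖ = 1 := Eabs'
  have habs23 : ‖(2:ℂ)/3‖ = 2/3 := by
    rw [norm_div]; norm_num
  rw [norm_mul, norm_mul, habsE, habs23, mul_one]
  -- now bound abs (a^3 - b^3 - 3s)
  set r := ‖lam‖ with hr
  have hr0 : (0:ℝ) < r := by
    rw [hr]; exact norm_pos_iff.mpr hlam
  set u := Real.sqrt r with hu
  have hu2 : u ^ 2 = r := Real.sq_sqrt hr0.le
  have hu0 : 0 ≤ u := Real.sqrt_nonneg r
  have hu2le : (2:ℝ) ≤ u := by
    rw [hu, show (2:ℝ) = Real.sqrt 4 by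
      rw [show (4:ℝ) = 2^2 by norm_num, Real.sqrt_sq]; norm_num]
    exact Real.sqrt_le_sqrt hR
  -- abs facts
  set Aa := ‖a‖ with hAa
  set Ba := ‖b‖ with hBa
  set Sa := ‖s‖ with hSa
  have hAa2 : Aa ^ 2 = ‖1 - lam‖ := by rw [hAa, ← norm_pow, ha2]
  have hBa2 : Ba ^ 2 = ‖-1 - lam‖ := by rw [hBa, ← norm_pow, hb2]
  have hSa2 : Sa ^ 2 = r := by
    rw [hSa, ← norm_pow, hs2, norm_neg, hr]
  have hSau : Sa = u := by
    have h1 : Sa = Real.sqrt (Sa ^ 2) := (Real.sqrt_sq (norm_nonneg s)).symm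
    rw [h1, hSa2, hu]
  -- bounds on Aa, Ba
  have hAaup : Aa ^ 2 ≤ 1 + r := by
    rw [hAa2]
    calc ‖1 - lam‖ ≤ ‖(1:ℂ)‖ + ‖lam‖ :=
          norm_sub_le 1 lam
      _ = 1 + r := by rw [norm_one, hr]
  have hAalow : r - 1 ≤ Aa ^ 2 := by
    rw [hAa2]
    calc r - 1 = ‖lam‖ - ‖(1:ℂ)‖ := by rw [norm_one, hr]
      _ ≤ ‖lam - 1‖ := norm_sub_norm_le lam 1
      _ = ‖1 - lam‖ := by rw [norm_sub_rev]
  have hBaup : Ba ^ 2 ≤ 1 + r := by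
    rw [hBa2]
    calc ‖-1 - lam‖ ≤ ‖(-1:ℂ)‖ + ‖lam‖ :=
          norm_sub_le (-1) lam
      _ = 1 + r := by rw [norm_neg, norm_one, hr]
  -- lower bounds on sums
  have L1 : u ≤ ‖a + s‖ := by
    rw [show a + s = s + a by ring, ← hSau]
    exact abs_le_abs_add' s a hsre.le hsim hare.le haim
  have L2 : u ≤ ‖b + s‖ := by
    rw [show b + s = s + b by ring, ← hSau]
    exact abs_le_abs_add' s b hsre.le hsim hbre.le hbim
  have L3 : Aa ≤ ‖a + b‖ := by
    rw [hAa]; exact abs_le_abs_add' a b hare.le haim hbre.le hbim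
  -- identity in abs
  have hXP : ‖a^3 - b^3 - 3*s‖ *
      (‖a+b‖ ^ 2 * ‖a+s‖ * ‖b+s‖) =
      2 * ‖s - a - b‖ := by
    have h0 := congrArg (‖·‖) (key_identity' a b s lam ha2 hb2 hs2)
    rw [norm_mul, norm_mul, norm_mul, norm_pow, norm_mul] at h0
    rw [h0, Complex.norm_two]
  -- numerator bound
  have hNum : ‖s - a - b‖ ≤ u + Aa + Ba := by
    calc ‖s - a - b‖ ≤ ‖s - a‖ + ‖b‖ :=
          norm_sub_le (s - a) b
      _ ≤ ‖s‖ + ‖a‖ + ‖b‖ := by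
          linarith [norm_sub_le s a]
      _ = Sa + Aa + Ba := rfl
      _ = u + Aa + Ba := by rw [hSau]
  -- final rpow computation
  have hrpow : r ^ (-(3:ℝ)/2) = (u^3)⁻¹ := by
    rw [← hu2, ← Real.rpow_natCast u 2, ← Real.rpow_mul hu0, ← Real.rpow_natCast u 3]
    rw [← Real.rpow_neg hu0]
    norm_num
  rw [hrpow, ← div_eq_mul_inv]
  exact final_arith' u (‖a^3 - b^3 - 3*s‖) (‖a+b‖)
    (‖a+s‖) (‖b+s‖) Aa Ba (‖s - a - b‖)
    hu2le (norm_nonneg _) (norm_nonneg a) (norm_nonneg b)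
    (norm_nonneg _) (norm_nonneg _) (norm_nonneg _)
    (by rw [hu2]; linarith) (by rw [hu2]; linarith) (by rw [hu2]; linarith)
    L1 L2 L3 hNum (norm_nonneg _) hXP
end
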